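/- Let F : [0, ∞) → (0, ∞)^I be a solution of the discrete exact-resonance acoustic kinetic system with strictly positive values. Then the trajectory is persistent and bounded: there exist constants 0 < m ≤ M such that m ≤ F_k(t) ≤ M for all k ∈ {1,…,I} and all t ≥ 0. -/

import Mathlib

open scoped BigOperators Classical

/-- Right-hand side of the discrete exact-resonance acoustic kinetic system on one ray:
for `k₁ ∈ {1,…,I}` and kernel `V_{k₁,k₂,k₃} = μ k₁ k₂ k₃`,
`Q_{k₁}[F] = ∑_{k₂+k₃=k₁} V (F_{k₂}F_{k₃} − F_{k₁}(F_{k₂}+F_{k₃}))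
  − 2 ∑_{k₁+k₂=k₃} V (F_{k₁}F_{k₂} − F_{k₃}(F_{k₁}+F_{k₂}))`. -/
noncomputable def Qd (I : ℕ) (μ : ℝ) (F : ℕ → ℝ) (k1 : ℕ) : ℝ :=
  (∑ k2 ∈ Finset.Icc 1 I, ∑ k3 ∈ Finset.Icc 1 I,
      if k2 + k3 = k1 then μ * k1 * k2 * k3 * (F k2 * F k3 - F k1 * (F k2 + F k3)) else 0)
  - 2 * ∑ k2 ∈ Finset.Icc 1 I, ∑ k3 ∈ Finset.Icc 1 I,
      if k1 + k2 = k3 then μ * k3 * k1 * k2 * (F k1 * F k2 - F k3 * (F k1 + F k2)) else 0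

/-!
The energy `∑ k F_k` is conserved, which bounds every `F_k` from above. The entropy
`∑ log F_k` is nondecreasing: testing `Q` against `1 / F` turns the contribution of each
resonant triad `k = a + b` into `V (F_a F_b - F_k (F_a + F_b))² / (F_a F_b F_k) ≥ 0`.
With the upper bounds on the other modes, the entropy bound then bounds each `log F_k` below.
-/

open Finset Real

/-- `V_{a+b,a,b} [F_a F_b - F_{a+b} (F_a + F_b)]` in the notation of `Qd`. -/
noncomputable def triadFlux (μ : ℝ) (F : ℕ → ℝ) (a b : ℕ) : ℝ :=
  μ * ((a + b : ℕ) : ℝ) * a * b * (F a * F b - F (a + b) * (F a + F b))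

lemma triadFlux_comm (μ : ℝ) (F : ℕ → ℝ) (a b : ℕ) : triadFlux μ F a b = triadFlux μ F b a := by
  unfold triadFlux; rw [Nat.add_comm b a]; ring

lemma Qd_eq_triadFlux (I : ℕ) (μ : ℝ) (F : ℕ → ℝ) (k : ℕ) :
    Qd I μ F k = (∑ a ∈ Icc 1 I, ∑ b ∈ Icc 1 I, if a + b = k then triadFlux μ F a b else 0)
      - 2 * ∑ b ∈ Icc 1 I, if k + b ∈ Icc 1 I then triadFlux μ F k b else 0 := by
  unfold Qd
  congr 1
  · refine sum_congr rfl fun a _ => sum_congr rfl fun b _ => ?_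
    split_ifs with h
    · subst h; rfl
    · rfl
  · exact congrArg (2 * ·) (sum_congr rfl fun b _ => sum_ite_eq _ _ _)

lemma sum_mul_Qd (I : ℕ) (μ : ℝ) (F g : ℕ → ℝ) :
    ∑ k ∈ Icc 1 I, g k * Qd I μ F k
      = ∑ a ∈ Icc 1 I, ∑ b ∈ Icc 1 I,
          if a + b ∈ Icc 1 I then (g (a + b) - g a - g b) * triadFlux μ F a b else 0 := by
  simp only [Qd_eq_triadFlux, mul_sub, sum_sub_distrib]
  set S := Icc 1 I
  set T : ℕ → ℕ → ℝ := fun a b => if a + b ∈ S then triadFlux μ F a b else 0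
  have gain : ∑ k ∈ S, g k * ∑ a ∈ S, ∑ b ∈ S, (if a + b = k then triadFlux μ F a b else 0)
      = ∑ a ∈ S, ∑ b ∈ S, g (a + b) * T a b := by
    simp only [mul_sum, mul_ite, mul_zero, T]
    rw [sum_comm]
    refine sum_congr rfl fun a _ => ?_
    rw [sum_comm]
    exact sum_congr rfl fun b _ => sum_ite_eq S (a + b) _
  have swap : ∑ a ∈ S, ∑ b ∈ S, g a * T a b = ∑ a ∈ S, ∑ b ∈ S, g b * T a b := by
    rw [sum_comm]
    refine sum_congr rfl fun a _ => sum_congr rfl fun b _ => ?_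
    simp only [T, Nat.add_comm b a, triadFlux_comm μ F b a]
  have loss : ∑ k ∈ S, g k * (2 * ∑ b ∈ S, if k + b ∈ S then triadFlux μ F k b else 0)
      = ∑ a ∈ S, ∑ b ∈ S, (g a + g b) * T a b := by
    simp only [add_mul, sum_add_distrib, mul_sum]
    rw [← swap]
    simp only [← sum_add_distrib, T]
    exact sum_congr rfl fun a _ => sum_congr rfl fun b _ => by ring
  rw [gain, loss, ← sum_sub_distrib]
  refine sum_congr rfl fun a _ => ?_
  rw [← sum_sub_distrib]
  refine sum_congr rfl fun b _ => ?_
  simp only [T, mul_ite, mul_zero]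
  split_ifs <;> ring

lemma sum_nat_mul_Qd_eq_zero (I : ℕ) (μ : ℝ) (F : ℕ → ℝ) :
    ∑ k ∈ Icc 1 I, (k : ℝ) * Qd I μ F k = 0 := by
  rw [sum_mul_Qd I μ F (fun k => (k : ℝ))]
  refine sum_eq_zero fun a _ => sum_eq_zero fun b _ => ?_
  push_cast
  simp

lemma sum_inv_mul_Qd_nonneg (I : ℕ) {μ : ℝ} (hμ : 0 ≤ μ) {F : ℕ → ℝ}
    (hF : ∀ k ∈ Icc 1 I, 0 < F k) :
    0 ≤ ∑ k ∈ Icc 1 I, (F k)⁻¹ * Qd I μ F k := by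
  rw [sum_mul_Qd I μ F (fun k => (F k)⁻¹)]
  refine sum_nonneg fun a ha => sum_nonneg fun b hb => ?_
  split_ifs with hab
  · have hFa := hF a ha
    have hFb := hF b hb
    have hFab := hF (a + b) hab
    have entropy_production : ((F (a + b))⁻¹ - (F a)⁻¹ - (F b)⁻¹) * triadFlux μ F a b
        = μ * ((a + b : ℕ) : ℝ) * a * b *
          (F a * F b - F (a + b) * (F a + F b)) ^ 2 / (F a * F b * F (a + b)) := by
      unfold triadFlux
      field_simp
      ring
    rw [entropy_production]
    positivity
  · exact le_rfl

lemma le_sum_nat_mul {I : ℕ} {x : ℕ → ℝ} (hx : ∀ j ∈ Icc 1 I, 0 ≤ x j) {k : ℕ}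
    (hk : k ∈ Icc 1 I) : x k ≤ ∑ j ∈ Icc 1 I, (j : ℝ) * x j := by
  have hk1 : (1 : ℝ) ≤ k := by exact_mod_cast (mem_Icc.1 hk).1
  calc x k ≤ k * x k := le_mul_of_one_le_left (hx k hk) hk1
    _ ≤ ∑ j ∈ Icc 1 I, (j : ℝ) * x j :=
        single_le_sum (fun j hj => mul_nonneg j.cast_nonneg (hx j hj)) hk

lemma exp_sub_le_of_le_sum_log {ι : Type*} {s : Finset ι} {x : ι → ℝ} {L M : ℝ}
    (hx : ∀ j ∈ s, 0 < x j) (hM : ∀ j ∈ s, x j ≤ M) (hL : L ≤ ∑ j ∈ s, log (x j))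
    {k : ι} (hk : k ∈ s) : exp (L - (#s - 1 : ℝ) * log M) ≤ x k := by
  have rest : ∑ j ∈ s.erase k, log (x j) ≤ (#s - 1 : ℝ) * log M := by
    calc ∑ j ∈ s.erase k, log (x j) ≤ #(s.erase k) • log M :=
          sum_le_card_nsmul _ _ _ fun j hj =>
            log_le_log (hx j (mem_of_mem_erase hj)) (hM j (mem_of_mem_erase hj))
      _ = (#s - 1 : ℝ) * log M := by
          rw [nsmul_eq_mul, card_erase_of_mem hk, Nat.cast_pred (card_pos.2 ⟨k, hk⟩)]
  rw [← add_sum_erase s _ hk] at hL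
  calc exp (L - (#s - 1 : ℝ) * log M) ≤ exp (log (x k)) := exp_le_exp.2 (by linarith)
    _ = x k := exp_log (hx k hk)

section Solution

variable {I : ℕ} {μ : ℝ} {F : ℝ → ℕ → ℝ}

lemma energy_eq_of_hasDerivAt
    (hsol : ∀ k ∈ Icc 1 I, ∀ t : ℝ, 0 ≤ t → HasDerivAt (fun s => F s k) (Qd I μ (F t) k) t)
    {t : ℝ} (ht : 0 ≤ t) :
    ∑ k ∈ Icc 1 I, (k : ℝ) * F t k = ∑ k ∈ Icc 1 I, (k : ℝ) * F 0 k := by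
  have hderiv : ∀ s, 0 ≤ s → HasDerivAt (fun s => ∑ k ∈ Icc 1 I, (k : ℝ) * F s k) 0 s := by
    intro s hs
    simpa only [sum_nat_mul_Qd_eq_zero] using
      HasDerivAt.fun_sum fun k hk => (hsol k hk s hs).const_mul (k : ℝ)
  exact constant_of_has_deriv_right_zero
    (fun s hs => (hderiv s hs.1).continuousAt.continuousWithinAt)
    (fun s hs => (hderiv s hs.1).hasDerivWithinAt) t ⟨ht, le_rfl⟩

lemma entropy_monotoneOn_of_hasDerivAt (hμ : 0 ≤ μ)
    (hsol : ∀ k ∈ Icc 1 I, ∀ t : ℝ, 0 ≤ t → HasDerivAt (fun s => F s k) (Qd I μ (F t) k) t)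
    (hpos : ∀ k ∈ Icc 1 I, ∀ t : ℝ, 0 ≤ t → 0 < F t k) :
    MonotoneOn (fun t => ∑ k ∈ Icc 1 I, log (F t k)) (Set.Ici 0) := by
  have hderiv : ∀ t, 0 ≤ t → HasDerivAt (fun t => ∑ k ∈ Icc 1 I, log (F t k))
      (∑ k ∈ Icc 1 I, (F t k)⁻¹ * Qd I μ (F t) k) t := by
    intro t ht
    simpa only [div_eq_inv_mul] using
      HasDerivAt.fun_sum fun k hk => (hsol k hk t ht).log (hpos k hk t ht).ne'
  refine monotoneOn_of_hasDerivWithinAt_nonneg (convex_Ici 0)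
    (fun t ht => (hderiv t ht).continuousAt.continuousWithinAt)
    (fun t ht => (hderiv t (interior_subset ht)).hasDerivWithinAt)
    (fun t ht => sum_inv_mul_Qd_nonneg I hμ fun k hk => hpos k hk t (interior_subset ht))

end Solution

theorem persistence_and_boundedness_general (I : ℕ) (μ : ℝ) (hμ : 0 < μ)
    (F : ℝ → ℕ → ℝ)
    (hsol : ∀ k ∈ Finset.Icc 1 I, ∀ t : ℝ, 0 ≤ t →
      HasDerivAt (fun s => F s k) (Qd I μ (F t) k) t)
    (hpos : ∀ k ∈ Finset.Icc 1 I, ∀ t : ℝ, 0 ≤ t → 0 < F t k) :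
    ∃ m M : ℝ, 0 < m ∧ m ≤ M ∧
      ∀ k ∈ Finset.Icc 1 I, ∀ t : ℝ, 0 ≤ t → m ≤ F t k ∧ F t k ≤ M := by
  set E := ∑ k ∈ Icc 1 I, (k : ℝ) * F 0 k
  set H := ∑ k ∈ Icc 1 I, log (F 0 k)
  have upper : ∀ k ∈ Icc 1 I, ∀ t : ℝ, 0 ≤ t → F t k ≤ E := fun k hk t ht =>
    (le_sum_nat_mul (fun j hj => (hpos j hj t ht).le) hk).trans
      (energy_eq_of_hasDerivAt hsol ht).le
  have lower : ∀ k ∈ Icc 1 I, ∀ t : ℝ, 0 ≤ t →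
      exp (H - (#(Icc 1 I) - 1 : ℝ) * log E) ≤ F t k := fun k hk t ht =>
    exp_sub_le_of_le_sum_log (fun j hj => hpos j hj t ht) (fun j hj => upper j hj t ht)
      (entropy_monotoneOn_of_hasDerivAt hμ.le hsol hpos Set.self_mem_Ici ht ht) hk
  exact ⟨_, max _ E, exp_pos _, le_max_left _ _,
    fun k hk t ht => ⟨lower k hk t ht, (upper k hk t ht).trans (le_max_right _ _)⟩⟩

/-- Persistence and boundedness: every positive solution of the discrete exact-resonance
acoustic kinetic system satisfies `m ≤ F_k(t) ≤ M` for some `0 < m ≤ M`. -/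
theorem persistence_and_boundedness (I : ℕ) (hI : 0 < I) (μ : ℝ) (hμ : 0 < μ)
    (F : ℝ → ℕ → ℝ)
    (hsol : ∀ k ∈ Finset.Icc 1 I, ∀ t : ℝ, 0 ≤ t →
      HasDerivAt (fun s => F s k) (Qd I μ (F t) k) t)
    (hpos : ∀ k ∈ Finset.Icc 1 I, ∀ t : ℝ, 0 ≤ t → 0 < F t k) :
    ∃ m M : ℝ, 0 < m ∧ m ≤ M ∧
      ∀ k ∈ Finset.Icc 1 I, ∀ t : ℝ, 0 ≤ t → m ≤ F t k ∧ F t k ≤ M :=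
  persistence_and_boundedness_general I μ hμ F hsol hpos
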